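/- arXiv:2605.28170 — 2 statements merged into one kernel-verified Lean document; each statement's English description precedes it below -/
import Mathlib

section
/- Let Y, C_1, …, C_n (n ≥ 1) be random variables taking values in finite sets on a common finite probability space, let N = {1, …, n}, and let w_n(A) = |A|!·(n − |A| − 1)!/n!. Define φ_k = Σ_{A ⊆ N∖{k}} w_n(A) · I(Y; C_k | C_A) for each k ∈ N. Then the Shapley values partition the total input-induced uncertainty: Σ_{k=1}^{n} φ_k = I(Y; C), where C = (C_1, …, C_n). -/
/-!
Each `φ k` is the Shapley value of the coalitional game `v A = -H(Y | C_A)`: conditional entropy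
is unchanged by an injective relabelling of the conditioning variable, so `H(Y | (C_k, C_A))` is
`H(Y | C_{A ∪ {k}})` and `I(Y; C_k | C_A) = v (A ∪ {k}) - v A`. Efficiency of the Shapley value
then gives `∑ k, φ k = v N - v ∅ = H(Y) - H(Y | C)`. Efficiency itself is a counting argument:
after exchanging the sums, a coalition `A` carries the total weight
`|A| w(|A| - 1) - (n - |A|) w(|A|)`, which vanishes unless `A = ∅` or `A = N`.
-/

/-- Probability of the event `Z = z` under the mass function `P`. -/
noncomputable def probOf {Ω : Type} [Fintype Ω] (P : Ω → ℝ) {α : Type} [DecidableEq α]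
    (Z : Ω → α) (z : α) : ℝ :=
  ∑ ω, if Z ω = z then P ω else 0

/-- Shannon entropy `H(Y) = ∑_y negMulLog P(Y = y)`. -/
noncomputable def entropyOf {Ω : Type} [Fintype Ω] (P : Ω → ℝ) {α : Type} [Fintype α]
    [DecidableEq α] (Y : Ω → α) : ℝ :=
  ∑ y, Real.negMulLog (probOf P Y y)

/-- Conditional entropy `H(Y | Z) = ∑_z P(Z = z) · H(Y | Z = z)`, where the inner entropy is
the Shannon entropy of the conditional distribution of `Y` given `Z = z` (terms with
`P(Z = z) = 0` contribute `0`, since division by zero yields zero). -/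
noncomputable def condEntropyOf {Ω : Type} [Fintype Ω] (P : Ω → ℝ) {α β : Type}
    [Fintype α] [DecidableEq α] [Fintype β] [DecidableEq β] (Y : Ω → α) (Z : Ω → β) : ℝ :=
  ∑ z, probOf P Z z *
    ∑ y, Real.negMulLog (probOf P (fun ω => (Y ω, Z ω)) (y, z) / probOf P Z z)

/-- Mutual information `I(Y; Z) = H(Y) − H(Y | Z)`. -/
noncomputable def mutualInfoOf {Ω : Type} [Fintype Ω] (P : Ω → ℝ) {α β : Type}
    [Fintype α] [DecidableEq α] [Fintype β] [DecidableEq β] (Y : Ω → α) (Z : Ω → β) : ℝ :=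
  entropyOf P Y - condEntropyOf P Y Z

/-- Conditional mutual information `I(Y; Z | W) = H(Y | W) − H(Y | (Z, W))`. -/
noncomputable def condMutualInfoOf {Ω : Type} [Fintype Ω] (P : Ω → ℝ) {α β γ : Type}
    [Fintype α] [DecidableEq α] [Fintype β] [DecidableEq β] [Fintype γ] [DecidableEq γ]
    (Y : Ω → α) (Z : Ω → β) (W : Ω → γ) : ℝ :=
  condEntropyOf P Y W - condEntropyOf P Y (fun ω => (Z ω, W ω))

/-- The tuple `C_A = (C_j)_{j ∈ A}` of the random variables indexed by the subset `A`. -/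
def restrictRV {Ω : Type} {n : ℕ} {𝒞 : Fin n → Type} (C : ∀ i, Ω → 𝒞 i)
    (A : Finset (Fin n)) : Ω → (∀ j : {x // x ∈ A}, 𝒞 j.1) :=
  fun ω j => C j.1 ω

open Finset Function

section Entropy

variable {Ω : Type} [Fintype Ω] (P : Ω → ℝ)

lemma probOf_comp_apply_of_injective {β γ : Type} [DecidableEq β] [DecidableEq γ]
    {u : β → γ} (hu : Injective u) (Z : Ω → β) (z : β) :
    probOf P (fun ω => u (Z ω)) (u z) = probOf P Z z := by
  simp only [probOf, hu.eq_iff]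

lemma probOf_comp_eq_zero_of_notMem_range {β γ : Type} [DecidableEq γ] {u : β → γ}
    (Z : Ω → β) {c : γ} (hc : c ∉ Set.range u) : probOf P (fun ω => u (Z ω)) c = 0 :=
  sum_eq_zero fun ω _ => if_neg fun h => hc ⟨Z ω, h⟩

lemma condEntropyOf_comp_of_injective {α β γ : Type} [Fintype α] [DecidableEq α]
    [Fintype β] [DecidableEq β] [Fintype γ] [DecidableEq γ] (Y : Ω → α) (Z : Ω → β)
    {u : β → γ} (hu : Injective u) :
    condEntropyOf P Y (fun ω => u (Z ω)) = condEntropyOf P Y Z := by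
  have hpair : Injective (Prod.map id u : α × β → α × γ) := injective_id.prodMap hu
  refine (Fintype.sum_of_injective u hu _ _ (fun c hc => ?_) fun z => ?_).symm
  · rw [probOf_comp_eq_zero_of_notMem_range P Z hc, zero_mul]
  · simp only [probOf_comp_apply_of_injective P hu]
    refine congrArg _ (sum_congr rfl fun y _ => ?_)
    rw [← probOf_comp_apply_of_injective P hpair (fun ω => (Y ω, Z ω)) (y, z)]
    rfl

lemma condEntropyOf_of_unique (hP1 : ∑ ω, P ω = 1) {α β : Type} [Fintype α] [DecidableEq α]
    [Fintype β] [DecidableEq β] [Unique β] (Y : Ω → α) (Z : Ω → β) :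
    condEntropyOf P Y Z = entropyOf P Y := by
  have hZ : ∀ ω, Z ω = default := fun ω => Subsingleton.elim _ _
  simp [condEntropyOf, entropyOf, probOf, Prod.ext_iff, hZ, hP1]

end Entropy

section Shapley

noncomputable def shapleyWeight (n a : ℕ) : ℝ :=
  (a.factorial * (n - a - 1).factorial : ℝ) / n.factorial

lemma mul_shapleyWeight_pred (n b : ℕ) :
    b * shapleyWeight n (b - 1) =
      if b = 0 then 0 else (b.factorial * (n - b).factorial : ℝ) / n.factorial := by
  rcases b with _ | b
  · simp
  · simp only [shapleyWeight, Nat.add_sub_cancel, Nat.sub_sub, Nat.factorial_succ]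
    push_cast
    ring

lemma sub_mul_shapleyWeight {n b : ℕ} (hb : b ≤ n) :
    ((n - b : ℕ) : ℝ) * shapleyWeight n b =
      if b = n then 0 else (b.factorial * (n - b).factorial : ℝ) / n.factorial := by
  rcases hb.eq_or_lt with rfl | hlt
  · simp
  · obtain ⟨m, hm⟩ : ∃ m, n - b = m + 1 := ⟨n - b - 1, by omega⟩
    simp only [shapleyWeight, hlt.ne, if_false, hm, Nat.add_sub_cancel, Nat.factorial_succ]
    push_cast
    ring

lemma card_mul_shapleyWeight_pred_sub {n b : ℕ} (hb : b ≤ n) :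
    b * shapleyWeight n (b - 1) - ((n - b : ℕ) : ℝ) * shapleyWeight n b =
      (if b = n then 1 else 0) - (if b = 0 then 1 else 0) := by
  rw [mul_shapleyWeight_pred, sub_mul_shapleyWeight hb]
  have hn : (n.factorial : ℝ) ≠ 0 := by positivity
  split_ifs with h0 hn' hn' <;> subst_vars <;> simp [hn]

variable {ι : Type} [Fintype ι] [DecidableEq ι]

noncomputable def shapleyValue (v : Finset ι → ℝ) (k : ι) : ℝ :=
  ∑ A ∈ (univ.erase k).powerset, shapleyWeight (Fintype.card ι) #A * (v (insert k A) - v A)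

lemma sum_sum_powerset_erase_eq_sum_compl (g : Finset ι → ℝ) :
    ∑ k, ∑ A ∈ (univ.erase k).powerset, g A = ∑ A, (#Aᶜ : ℝ) * g A := by
  rw [sum_comm' (t' := univ) (s' := fun A => Aᶜ) (fun k A => by simp [subset_erase])]
  simp [sum_const, nsmul_eq_mul]

lemma sum_sum_powerset_erase_insert (g : ℕ → Finset ι → ℝ) :
    ∑ k, ∑ A ∈ (univ.erase k).powerset, g #A (insert k A) = ∑ B, (#B : ℝ) * g (#B - 1) B := by
  have hinsert : ∀ k, ∑ A ∈ (univ.erase k).powerset, g #A (insert k A) =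
      ∑ B ∈ univ.filter (k ∈ ·), g (#B - 1) B := by
    intro k
    have hk : ∀ {A : Finset ι}, A ∈ (univ.erase k).powerset → k ∉ A := fun hA =>
      (subset_erase.1 (mem_powerset.1 hA)).2
    refine sum_nbij' (insert k) (erase · k) ?_ ?_ ?_ ?_ ?_ <;> intro A hA
    · simp
    · simpa using erase_subset_erase k (subset_univ A)
    · exact erase_insert (hk hA)
    · exact insert_erase (by simpa using hA)
    · rw [card_insert_of_notMem (hk hA), Nat.add_sub_cancel]
  simp only [hinsert]
  rw [sum_comm' (t' := univ) (s' := id) (fun k B => by simp)]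
  simp [sum_const, nsmul_eq_mul]

theorem sum_shapleyValue (v : Finset ι → ℝ) : ∑ k, shapleyValue v k = v univ - v ∅ := by
  calc ∑ k, shapleyValue v k
      = ∑ A, ((#A : ℝ) * shapleyWeight (Fintype.card ι) (#A - 1)
          - (#Aᶜ : ℝ) * shapleyWeight (Fintype.card ι) #A) * v A := by
        simp only [shapleyValue, mul_sub, sum_sub_distrib,
          sum_sum_powerset_erase_insert (fun a B => shapleyWeight (Fintype.card ι) a * v B),
          sum_sum_powerset_erase_eq_sum_compl (fun A => shapleyWeight (Fintype.card ι) #A * v A)]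
        rw [← sum_sub_distrib]
        exact sum_congr rfl fun A _ => by ring
    _ = ∑ A, ((if A = univ then 1 else 0) - (if A = ∅ then 1 else 0)) * v A := by
        refine sum_congr rfl fun A _ => ?_
        rw [card_compl, card_mul_shapleyWeight_pred_sub (card_le_univ A)]
        simp only [card_eq_iff_eq_univ, card_eq_zero]
    _ = v univ - v ∅ := by simp [sub_mul, sum_sub_distrib]

end Shapley

section Restriction

variable {Ω : Type} [Fintype Ω] (P : Ω → ℝ) {α : Type} [Fintype α] [DecidableEq α] (Y : Ω → α)
  {n : ℕ} {𝒞 : Fin n → Type} [∀ i, Fintype (𝒞 i)] [∀ i, DecidableEq (𝒞 i)] (C : ∀ i, Ω → 𝒞 i)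

lemma condEntropyOf_pair_restrictRV (k : Fin n) (A : Finset (Fin n)) :
    condEntropyOf P Y (fun ω => (C k ω, restrictRV C A ω)) =
      condEntropyOf P Y (restrictRV C (insert k A)) := by
  refine condEntropyOf_comp_of_injective P Y (restrictRV C (insert k A))
    (u := fun (g : ∀ j : {x // x ∈ insert k A}, 𝒞 j.1) =>
      (g ⟨k, mem_insert_self k A⟩, fun j : {x // x ∈ A} => g ⟨j.1, mem_insert_of_mem j.2⟩))
    fun g g' h => funext fun ⟨j, hj⟩ => ?_
  simp only [Prod.mk.injEq] at h
  rcases mem_insert.1 hj with rfl | hjA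
  · exact h.1
  · exact congrFun h.2 ⟨j, hjA⟩

lemma condEntropyOf_restrictRV_univ :
    condEntropyOf P Y (restrictRV C univ) = condEntropyOf P Y (fun ω i => C i ω) :=
  condEntropyOf_comp_of_injective P Y (fun ω i => C i ω)
    (u := fun (g : ∀ i, 𝒞 i) (j : {x // x ∈ (univ : Finset (Fin n))}) => g j.1)
    fun _ _ h => funext fun i => congrFun h ⟨i, mem_univ i⟩

end Restriction

theorem stmt3_general {Ω : Type} [Fintype Ω] (P : Ω → ℝ)
    (hP1 : ∑ ω, P ω = 1)
    (n : ℕ)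
    {𝒴 : Type} [Fintype 𝒴] [DecidableEq 𝒴] (Y : Ω → 𝒴)
    {𝒞 : Fin n → Type} [∀ i, Fintype (𝒞 i)] [∀ i, DecidableEq (𝒞 i)]
    (C : ∀ i, Ω → 𝒞 i)
    (φ : Fin n → ℝ)
    (hφ : ∀ k, φ k = ∑ A ∈ (Finset.univ.erase k).powerset,
      ((A.card.factorial * (n - A.card - 1).factorial : ℝ) / n.factorial) *
        condMutualInfoOf P Y (C k) (restrictRV C A)) :
    ∑ k, φ k = mutualInfoOf P Y (fun ω => fun i => C i ω) := by
  let v : Finset (Fin n) → ℝ := fun A => -condEntropyOf P Y (restrictRV C A)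
  have hφv : ∀ k, φ k = shapleyValue v k := fun k => by
    rw [hφ k, shapleyValue, Fintype.card_fin]
    refine sum_congr rfl fun A _ => ?_
    rw [condMutualInfoOf, condEntropyOf_pair_restrictRV]
    simp only [v, shapleyWeight]
    ring
  calc ∑ k, φ k = v univ - v ∅ := by simp only [hφv, sum_shapleyValue]
    _ = mutualInfoOf P Y (fun ω => fun i => C i ω) := by
      dsimp only [v]
      rw [mutualInfoOf, condEntropyOf_of_unique P hP1 Y (restrictRV C ∅),
        ← condEntropyOf_restrictRV_univ]
      ring

/-- With `φ_k = Σ_{A ⊆ N∖{k}} w_n(A) · I(Y; C_k | C_A)` where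
`w_n(A) = |A|!·(n − |A| − 1)!/n!`, the Shapley values partition the total
input-induced uncertainty: `Σ_{k=1}^{n} φ_k = I(Y; C)` with `C = (C_1, …, C_n)`. -/
theorem stmt3 {Ω : Type} [Fintype Ω] (P : Ω → ℝ)
    (hP0 : ∀ ω, 0 ≤ P ω) (hP1 : ∑ ω, P ω = 1)
    (n : ℕ) (hn : 1 ≤ n)
    {𝒴 : Type} [Fintype 𝒴] [DecidableEq 𝒴] (Y : Ω → 𝒴)
    {𝒞 : Fin n → Type} [∀ i, Fintype (𝒞 i)] [∀ i, DecidableEq (𝒞 i)]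
    (C : ∀ i, Ω → 𝒞 i)
    (φ : Fin n → ℝ)
    (hφ : ∀ k, φ k = ∑ A ∈ (Finset.univ.erase k).powerset,
      ((A.card.factorial * (n - A.card - 1).factorial : ℝ) / n.factorial) *
        condMutualInfoOf P Y (C k) (restrictRV C A)) :
    ∑ k, φ k = mutualInfoOf P Y (fun ω => fun i => C i ω) :=
  stmt3_general P hP1 n Y C φ hφ
end

section
/- Fix integers n ≥ 1, m ≥ 1, a finite set 𝒴, N = {1, …, n}, and for every full assignment c : N → {1, …, m} a probability vector p(·|c) : 𝒴 → ℝ (nonnegative and summing to 1). Define the expected conditional entropy at coalition A ⊆ N as E_A[H] = m^{−|A|} · Σ over partial assignments c_A : A → {1, …, m} of H(p(·|c_A)), with p(·|c_A) the bottom-up marginalized vector. Then for every A ⊆ N and every k ∈ N ∖ A, hierarchical monotonicity holds: E_A[H] ≥ E_{A∪{k}}[H]; equivalently, the empirical marginal contribution E_A[H] − E_{A∪{k}}[H] is non-negative. -/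
/-- The bottom-up marginalized vector `p(·|c_A) = m^{−(n−|A|)} · Σ_{c extends c_A} p(·|c)`,
the sum running over all full assignments `c : N → {1, …, m}` agreeing with `c_A` on `A`. -/
noncomputable def margin {n m : ℕ} {𝒴 : Type} [Fintype 𝒴]
    (p : (Fin n → Fin m) → 𝒴 → ℝ) (A : Finset (Fin n))
    (cA : {j // j ∈ A} → Fin m) (y : 𝒴) : ℝ :=
  (1 / (m : ℝ) ^ (n - A.card)) *
    ∑ c ∈ Finset.univ.filter (fun c : Fin n → Fin m => ∀ j : {j // j ∈ A}, c j.1 = cA j),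
      p c y

/-- The entropy `H(q) = Σ_{y∈𝒴} negMulLog (q y)` of a vector `q : 𝒴 → ℝ`. -/
noncomputable def entropyVec {𝒴 : Type} [Fintype 𝒴] (q : 𝒴 → ℝ) : ℝ :=
  ∑ y, Real.negMulLog (q y)

/-- The partial assignment on `A ∪ {k}` extending `c_A` by the value `v` at `k`. -/
def extendAssign {n m : ℕ} {A : Finset (Fin n)} (cA : {j // j ∈ A} → Fin m)
    (k : Fin n) (v : Fin m) : {j // j ∈ insert k A} → Fin m :=
  fun j => if h : j.1 ∈ A then cA ⟨j.1, h⟩ else v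

/-- The expected conditional entropy at coalition `A`:
`E_A[H] = m^{−|A|} · Σ_{c_A : A → {1,…,m}} H(p(·|c_A))`. -/
noncomputable def expCondEntropy {n m : ℕ} {𝒴 : Type} [Fintype 𝒴]
    (p : (Fin n → Fin m) → 𝒴 → ℝ) (A : Finset (Fin n)) : ℝ :=
  (1 / (m : ℝ) ^ A.card) *
    ∑ cA : {j // j ∈ A} → Fin m, entropyVec (margin p A cA)

section aux
variable {n m : ℕ} {𝒴 : Type} [Fintype 𝒴]

lemma margin_nonneg (p : (Fin n → Fin m) → 𝒴 → ℝ) (hp0 : ∀ c y, 0 ≤ p c y)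
    (A : Finset (Fin n)) (cA : {j // j ∈ A} → Fin m) (y : 𝒴) : 0 ≤ margin p A cA y := by
  unfold margin
  refine mul_nonneg (by positivity) (Finset.sum_nonneg fun c _ => hp0 c y)

lemma filter_extend (A : Finset (Fin n)) (k : Fin n) (hk : k ∉ A)
    (cA : {j // j ∈ A} → Fin m) (v : Fin m) :
    (Finset.univ.filter (fun c : Fin n → Fin m =>
        ∀ j : {j // j ∈ insert k A}, c j.1 = extendAssign cA k v j)) =
      (Finset.univ.filter (fun c : Fin n → Fin m => ∀ j : {j // j ∈ A}, c j.1 = cA j)).filter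
        (fun c => c k = v) := by
  ext c
  simp only [Finset.mem_filter, Finset.mem_univ, true_and]
  constructor
  · intro h
    refine ⟨fun j => ?_, ?_⟩
    · have := h ⟨j.1, Finset.mem_insert_of_mem j.2⟩
      simpa [extendAssign, j.2] using this
    · have := h ⟨k, Finset.mem_insert_self k A⟩
      simpa [extendAssign, hk] using this
  · rintro ⟨h1, h2⟩ j
    by_cases hj : j.1 ∈ A
    · simpa [extendAssign, hj] using h1 ⟨j.1, hj⟩
    · have hjk : j.1 = k := by
        rcases Finset.mem_insert.1 j.2 with h | h
        · exact h
        · exact absurd h hj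
      simp [extendAssign, hj, hjk, h2, hk]

lemma margin_decomp (p : (Fin n → Fin m) → 𝒴 → ℝ)
    (A : Finset (Fin n)) (k : Fin n) (hk : k ∉ A) (hcard : A.card + 1 ≤ n)
    (cA : {j // j ∈ A} → Fin m) (y : 𝒴) :
    margin p A cA y =
      (1 / (m : ℝ)) * ∑ v : Fin m, margin p (insert k A) (extendAssign cA k v) y := by
  have hBcard : (insert k A).card = A.card + 1 := Finset.card_insert_of_notMem hk
  have hsplit : ∑ c ∈ Finset.univ.filter
        (fun c : Fin n → Fin m => ∀ j : {j // j ∈ A}, c j.1 = cA j), p c y =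
      ∑ v : Fin m, ∑ c ∈ Finset.univ.filter (fun c : Fin n → Fin m =>
        ∀ j : {j // j ∈ insert k A}, c j.1 = extendAssign cA k v j), p c y := by
    rw [← Finset.sum_fiberwise (g := fun c : Fin n → Fin m => c k) (f := fun c => p c y)]
    refine Finset.sum_congr rfl fun v _ => ?_
    rw [filter_extend A k hk cA v, Finset.filter_filter]
  unfold margin
  rw [hsplit, Finset.mul_sum, Finset.mul_sum]
  refine Finset.sum_congr rfl fun v _ => ?_
  rw [← mul_assoc, hBcard]
  congr 1
  have : n - A.card = (n - (A.card + 1)) + 1 := by omega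
  rw [this]
  field_simp
  ring

def extendEquiv (A : Finset (Fin n)) (k : Fin n) (hk : k ∉ A) :
    (({j // j ∈ A} → Fin m) × Fin m) ≃ ({j // j ∈ insert k A} → Fin m) where
  toFun x := extendAssign x.1 k x.2
  invFun cB := (fun j => cB ⟨j.1, Finset.mem_insert_of_mem j.2⟩, cB ⟨k, Finset.mem_insert_self k A⟩)
  left_inv := by
    rintro ⟨cA, v⟩
    refine Prod.ext ?_ ?_
    · funext j; simp [extendAssign, j.2]
    · simp [extendAssign, hk]
  right_inv := by
    intro cB
    funext j
    by_cases hj : j.1 ∈ A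
    · simp [extendAssign, hj]
    · have hjk : j.1 = k := by
        rcases Finset.mem_insert.1 j.2 with h | h
        · exact h
        · exact absurd h hj
      simp only [extendAssign, hj, dif_neg, not_false_iff]
      congr 1
      exact Subtype.ext hjk.symm

end aux


/-- Hierarchical monotonicity: if every bottom-level vector `p(·|c)` is a
probability vector, then for every `A ⊆ N` and every `k ∈ N ∖ A`,
`E_A[H] ≥ E_{A∪{k}}[H]`; equivalently, `E_A[H] − E_{A∪{k}}[H] ≥ 0`. -/
theorem stmt9 (n m : ℕ) (hn : 1 ≤ n) (hm : 1 ≤ m)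
    {𝒴 : Type} [Fintype 𝒴] (p : (Fin n → Fin m) → 𝒴 → ℝ)
    (hp0 : ∀ c y, 0 ≤ p c y) (hp1 : ∀ c, ∑ y, p c y = 1)
    (A : Finset (Fin n)) (k : Fin n) (hk : k ∉ A) :
    expCondEntropy p A ≥ expCondEntropy p (insert k A) ∧
      0 ≤ expCondEntropy p A - expCondEntropy p (insert k A) := by
  have hm0 : (0 : ℝ) < m := by exact_mod_cast hm
  have hcard : A.card + 1 ≤ n := by
    have := Finset.card_le_univ (insert k A)
    rw [Finset.card_insert_of_notMem hk] at this
    simpa using this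
  have hBcard : (insert k A).card = A.card + 1 := Finset.card_insert_of_notMem hk
  -- Jensen step for each cA
  have key : ∀ cA : {j // j ∈ A} → Fin m,
      (1 / (m : ℝ)) * ∑ v : Fin m, entropyVec (margin p (insert k A) (extendAssign cA k v))
        ≤ entropyVec (margin p A cA) := by
    intro cA
    rw [Finset.mul_sum]
    unfold entropyVec
    simp_rw [Finset.mul_sum]
    rw [Finset.sum_comm]
    refine Finset.sum_le_sum fun y _ => ?_
    have hconc := Real.concaveOn_negMulLog
    have := hconc.le_map_sum (t := (Finset.univ : Finset (Fin m)))
      (w := fun _ => 1 / (m : ℝ))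
      (p := fun v => margin p (insert k A) (extendAssign cA k v) y)
      (fun i _ => by positivity)
      (by simp; field_simp)
      (fun i _ => margin_nonneg p hp0 _ _ _)
    calc ∑ v : Fin m, 1 / (m : ℝ) * Real.negMulLog (margin p (insert k A) (extendAssign cA k v) y)
        ≤ Real.negMulLog (∑ v : Fin m, (1 / (m : ℝ)) • margin p (insert k A) (extendAssign cA k v) y) := by
          simpa [smul_eq_mul] using this
      _ = Real.negMulLog (margin p A cA y) := by
          rw [margin_decomp p A k hk hcard cA y, Finset.mul_sum]
          simp [smul_eq_mul]
  -- reindex sum over insert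
  have hreindex : ∑ cB : {j // j ∈ insert k A} → Fin m, entropyVec (margin p (insert k A) cB)
      = ∑ cA : {j // j ∈ A} → Fin m, ∑ v : Fin m,
          entropyVec (margin p (insert k A) (extendAssign cA k v)) := by
    rw [← Equiv.sum_comp (extendEquiv A k hk)
      (fun cB => entropyVec (margin p (insert k A) cB))]
    rw [Fintype.sum_prod_type]
    rfl
  have main : expCondEntropy p (insert k A) ≤ expCondEntropy p A := by
    unfold expCondEntropy
    rw [hreindex, hBcard]
    have h1 : (1 : ℝ) / (m : ℝ) ^ (A.card + 1) = (1 / (m:ℝ) ^ A.card) * (1 / m) := by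
      rw [pow_succ]; field_simp
    rw [h1, mul_assoc, Finset.mul_sum]
    refine mul_le_mul_of_nonneg_left ?_ (by positivity)
    exact Finset.sum_le_sum fun cA _ => key cA
  exact ⟨main, by linarith⟩
end
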